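/- (Problem-independent regret bound for ESTC.) In the ESTC bandit model below, suppose ‖x_{t,a}‖ ≤ k1 almost surely for all t, a, and that f(x₁,θ) − f(x₂,θ) ≤ C1‖x₁ − x₂‖ and f(x,θ₁) − f(x,θ₂) ≤ C2‖θ₁ − θ₂‖ for all contexts and parameters. Define the events A = {λ ≥ 2R*(∇L_{T0}(θ*))} and E = {B_{T0}(θ, θ*) ≥ α‖θ − θ*‖² − Z for all θ with θ − θ* ∈ ℂ}, where B_{T0} is the Bregman divergence of L_{T0} at θ*. Then the expected cumulative regret satisfies E[Regret(T)] ≤ 2C1k1T0 + 2C1k1·Σ_{t=T0}^{T}[P(Aᶜ) + P(Eᶜ)] + 2C2·Σ_{t=T0}^{T} √(9(λ²/α²)φ² + (1/α)(2Z + 4λR(θ*_{M^⊥}))). -/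

import Mathlib

/-!
On the event `A ∩ E` the Lasso-type estimate `θ_{T0}` is close to `θ*`: optimality of `θ_{T0}`,
`λ ≥ 2R*(∇L(θ*))` and decomposability of `R` force `Δ = θ_{T0} - θ*` into the cone `ℂ` and bound
the Bregman divergence of `L` at `θ*` by `λ (3/2 R(Δ_{M̄}) + 2 R(θ*_{M⊥}))`; restricted strong
convexity and `R(Δ_{M̄}) ≤ φ‖Δ‖` turn this into a quadratic inequality for `‖Δ‖`. A round of
regret costs at most `2 C1 k1` (bounded contexts), and in the commit phase on `A ∩ E` at most
`2 C2 ‖θ_{T0} - θ*‖` (greedy choice under the estimate). Integrating splits the expected regret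
into these two regimes.
-/

noncomputable section
open MeasureTheory ProbabilityTheory
open scoped RealInnerProductSpace

/-- Orthogonal projection of `θ` onto the subspace `N`, in the ambient space. -/
def proj {p : ℕ} (N : Submodule ℝ (EuclideanSpace ℝ (Fin p)))
    (θ : EuclideanSpace ℝ (Fin p)) : EuclideanSpace ℝ (Fin p) :=
  (N.orthogonalProjection θ : EuclideanSpace ℝ (Fin p))

/-- Dual norm `R*(u) = sup { ⟨u, v⟩ : R(v) ≤ 1 }`. -/
def dualNorm {p : ℕ} (R : EuclideanSpace ℝ (Fin p) → ℝ)
    (u : EuclideanSpace ℝ (Fin p)) : ℝ :=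
  sSup ((fun v => ⟪u, v⟫) '' {v | R v ≤ 1})

theorem ConvexOn.inner_gradient_le_sub {E : Type*} [NormedAddCommGroup E]
    [InnerProductSpace ℝ E] [CompleteSpace E] {F : E → ℝ} (hF : ConvexOn ℝ Set.univ F)
    {x : E} (hx : DifferentiableAt ℝ F x) (y : E) :
    ⟪gradient F x, y - x⟫ ≤ F y - F x := by
  let g : ℝ →ᵃ[ℝ] E := AffineMap.lineMap x y
  have hFg : HasFDerivAt F (InnerProductSpace.toDual ℝ E (gradient F x)) (g 0) := by
    simpa [g] using hx.hasGradientAt.hasFDerivAt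
  have hderiv : HasDerivAt (F ∘ g) ⟪gradient F x, y - x⟫ 0 := by
    simpa [g] using
      hFg.comp_hasDerivAt 0 (AffineMap.hasDerivAt_lineMap (a := x) (b := y) (x := 0))
  simpa [g, slope_def_field] using (hF.comp_affineMap g).le_slope_of_hasDerivAt
    (Set.mem_univ 0) (Set.mem_univ 1) zero_lt_one hderiv

theorem Seminorm.continuous_of_finiteDimensional {E : Type*} [NormedAddCommGroup E]
    [NormedSpace ℝ E] [FiniteDimensional ℝ E] (ρ : Seminorm ℝ E) : Continuous ρ := by
  simpa [continuousOn_univ] using ρ.convexOn.continuousOn_interior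

theorem Seminorm.exists_pos_mul_norm_le {E : Type*} [NormedAddCommGroup E]
    [NormedSpace ℝ E] [FiniteDimensional ℝ E] (ρ : Seminorm ℝ E)
    (hρ : ∀ v, ρ v = 0 → v = 0) : ∃ c > 0, ∀ v, c * ‖v‖ ≤ ρ v := by
  rcases subsingleton_or_nontrivial E with hE | hE
  · exact ⟨1, one_pos, fun v => by simp [Subsingleton.elim v 0]⟩
  obtain ⟨u, hu, hmin⟩ := (isCompact_sphere (0 : E) 1).exists_isMinOn
    (NormedSpace.sphere_nonempty.2 zero_le_one) ρ.continuous_of_finiteDimensional.continuousOn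
  have hu0 : u ≠ 0 := ne_zero_of_mem_unit_sphere ⟨u, hu⟩
  refine ⟨ρ u, (apply_nonneg ρ u).lt_of_ne' fun h => hu0 (hρ u h), fun v => ?_⟩
  rcases eq_or_ne v 0 with rfl | hv
  · simp
  have hv' : (0 : ℝ) < ‖v‖ := norm_pos_iff.2 hv
  have hmem : ‖v‖⁻¹ • v ∈ Metric.sphere (0 : E) 1 := by
    simp [norm_smul, hv'.ne']
  calc ρ u * ‖v‖ ≤ ρ (‖v‖⁻¹ • v) * ‖v‖ := by gcongr; exact hmin hmem
    _ = ρ v := by rw [map_smul_eq_mul, norm_inv, norm_norm]; field_simp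

theorem sq_le_of_mul_sq_le_add_mul {α b C s : ℝ} (hα : 0 < α) (h : α * s ^ 2 ≤ C + b * s) :
    s ^ 2 ≤ (b / α) ^ 2 + 2 * C / α := by
  have hα2 : α ^ 2 * s ^ 2 ≤ b ^ 2 + 2 * α * C := by
    nlinarith [sq_nonneg (α * s - b), mul_le_mul_of_nonneg_left h hα.le]
  rw [div_pow, div_add_div _ _ (by positivity) hα.ne', le_div_iff₀ (by positivity)]
  nlinarith

section Regularizer

variable {p : ℕ} (ρ : Seminorm ℝ (EuclideanSpace ℝ (Fin p)))

theorem inner_le_dualNorm_mul (hρ : ∀ v, ρ v = 0 → v = 0)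
    (u w : EuclideanSpace ℝ (Fin p)) : ⟪u, w⟫ ≤ dualNorm ρ u * ρ w := by
  obtain ⟨c, hc, hcρ⟩ := ρ.exists_pos_mul_norm_le hρ
  have hbdd : BddAbove ((fun v => ⟪u, v⟫) '' {v | ρ v ≤ 1}) := by
    refine ⟨‖u‖ * c⁻¹, ?_⟩
    rintro _ ⟨v, hv, rfl⟩
    have hvc : ‖v‖ ≤ c⁻¹ := by
      rw [← one_div, le_div_iff₀' hc]; exact (hcρ v).trans hv
    exact (real_inner_le_norm u v).trans (by gcongr)
  rcases (apply_nonneg ρ w).eq_or_lt' with hw | hw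
  · simp [hρ w hw]
  have hunit : ρ ((ρ w)⁻¹ • w) ≤ 1 := by
    rw [map_smul_eq_mul, Real.norm_eq_abs, abs_inv, abs_of_pos hw, inv_mul_cancel₀ hw.ne']
  have hsup : (ρ w)⁻¹ * ⟪u, w⟫ ≤ dualNorm ρ u := by
    rw [← real_inner_smul_right]; exact le_csSup hbdd ⟨_, hunit, rfl⟩
  rwa [inv_mul_le_iff₀ hw, mul_comm] at hsup

variable {M Mbar : Submodule ℝ (EuclideanSpace ℝ (Fin p))}

theorem apply_proj_le_mul_norm {φ : ℝ}
    (hφ : IsLUB ((fun u => ρ u / ‖u‖) '' {u | u ∈ Mbar ∧ u ≠ 0}) φ)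
    (v : EuclideanSpace ℝ (Fin p)) : ρ (proj Mbar v) ≤ φ * ‖v‖ := by
  have hφ0 : 0 ≤ φ := by
    obtain ⟨_, ⟨u, hu, rfl⟩⟩ := hφ.nonempty
    exact (div_nonneg (apply_nonneg ρ u) (norm_nonneg u)).trans (hφ.1 ⟨u, hu, rfl⟩)
  have hmem : proj Mbar v ∈ Mbar := Mbar.starProjection_apply_mem v
  calc ρ (proj Mbar v) ≤ φ * ‖proj Mbar v‖ := by
        rcases eq_or_ne (proj Mbar v) 0 with h | h
        · simp [h]
        · rw [← div_le_iff₀ (norm_pos_iff.2 h)]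
          exact hφ.1 ⟨_, ⟨hmem, h⟩, rfl⟩
    _ ≤ φ * ‖v‖ := by gcongr; exact Mbar.norm_starProjection_apply_le v

theorem apply_sub_apply_add_le_of_decomposable
    (hdec : ∀ θ ∈ M, ∀ γ ∈ Mbarᗮ, ρ (θ + γ) = ρ θ + ρ γ) (θ Δ : EuclideanSpace ℝ (Fin p)) :
    ρ θ - ρ (θ + Δ) ≤ ρ (proj Mbar Δ) + 2 * ρ (proj Mᗮ θ) - ρ (proj Mbarᗮ Δ) := by
  have hθ : proj M θ + proj Mᗮ θ = θ := M.starProjection_add_starProjection_orthogonal θ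
  have hΔ : proj Mbar Δ + proj Mbarᗮ Δ = Δ :=
    Mbar.starProjection_add_starProjection_orthogonal Δ
  have hsplit : proj M θ + proj Mbarᗮ Δ = θ + Δ - (proj Mᗮ θ + proj Mbar Δ) := by
    rw [eq_sub_iff_add_eq]
    conv_rhs => rw [← hθ, ← hΔ]
    abel
  have hsep : ρ (proj M θ + proj Mbarᗮ Δ) = ρ (proj M θ) + ρ (proj Mbarᗮ Δ) :=
    hdec _ (M.starProjection_apply_mem θ) _ (Mbarᗮ.starProjection_apply_mem Δ)
  have h1 := map_sub_le_add ρ (θ + Δ) (proj Mᗮ θ + proj Mbar Δ)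
  have h2 := map_add_le_add ρ (proj Mᗮ θ) (proj Mbar Δ)
  have h3 := map_add_le_add ρ (proj M θ) (proj Mᗮ θ)
  rw [← hsplit, hsep] at h1
  rw [hθ] at h3
  linarith

variable {Lf : EuclideanSpace ℝ (Fin p) → ℝ} {θstar θhat : EuclideanSpace ℝ (Fin p)} {lam : ℝ}

theorem bregman_le_of_regularized_min (hρ : ∀ v, ρ v = 0 → v = 0)
    (hdec : ∀ θ ∈ M, ∀ γ ∈ Mbarᗮ, ρ (θ + γ) = ρ θ + ρ γ) (hlam : 0 ≤ lam)
    (hmin : Lf θhat + lam * ρ θhat ≤ Lf θstar + lam * ρ θstar)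
    (hA : 2 * dualNorm ρ (gradient Lf θstar) ≤ lam) :
    Lf θhat - Lf θstar - ⟪gradient Lf θstar, θhat - θstar⟫ ≤
      lam * (3 / 2 * ρ (proj Mbar (θhat - θstar)) + 2 * ρ (proj Mᗮ θstar)
        - 1 / 2 * ρ (proj Mbarᗮ (θhat - θstar))) := by
  set Δ := θhat - θstar
  have hsplit : ρ Δ ≤ ρ (proj Mbar Δ) + ρ (proj Mbarᗮ Δ) := by
    conv_lhs => rw [← Mbar.starProjection_add_starProjection_orthogonal Δ]
    exact map_add_le_add ρ _ _
  have hpair : -⟪gradient Lf θstar, Δ⟫ ≤ lam / 2 * ρ Δ := by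
    have h := inner_le_dualNorm_mul ρ hρ (gradient Lf θstar) (-Δ)
    rw [inner_neg_right, map_neg_eq_map] at h
    nlinarith [apply_nonneg ρ Δ]
  have hdecomp := apply_sub_apply_add_le_of_decomposable ρ hdec θstar Δ
  rw [add_sub_cancel] at hdecomp
  nlinarith [mul_le_mul_of_nonneg_left hdecomp hlam, mul_le_mul_of_nonneg_left hsplit hlam]

theorem norm_sub_le_of_regularized_min (hρ : ∀ v, ρ v = 0 → v = 0)
    (hdec : ∀ θ ∈ M, ∀ γ ∈ Mbarᗮ, ρ (θ + γ) = ρ θ + ρ γ) {φ : ℝ}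
    (hφ : IsLUB ((fun u => ρ u / ‖u‖) '' {u | u ∈ Mbar ∧ u ≠ 0}) φ) {α Z : ℝ}
    (hlam : 0 < lam) (hα : 0 < α) (hconv : ConvexOn ℝ Set.univ Lf)
    (hdiff : DifferentiableAt ℝ Lf θstar)
    (hmin : Lf θhat + lam * ρ θhat ≤ Lf θstar + lam * ρ θstar)
    (hA : 2 * dualNorm ρ (gradient Lf θstar) ≤ lam)
    (hE : ρ (proj Mbarᗮ (θhat - θstar)) ≤
        3 * ρ (proj Mbar (θhat - θstar)) + 4 * ρ (proj Mᗮ θstar) →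
      α * ‖θhat - θstar‖ ^ 2 - Z ≤
        Lf θhat - Lf θstar - ⟪gradient Lf θstar, θhat - θstar⟫) :
    ‖θhat - θstar‖ ≤
      √(9 * (lam ^ 2 / α ^ 2) * φ ^ 2 +
        (1 / α) * (2 * Z + 4 * lam * ρ (proj Mᗮ θstar))) := by
  have hbreg :=
    bregman_le_of_regularized_min ρ (M := M) (Mbar := Mbar) hρ hdec hlam.le hmin hA
  -- the Bregman divergence of a convex function is nonnegative
  have hcone : ρ (proj Mbarᗮ (θhat - θstar)) ≤
      3 * ρ (proj Mbar (θhat - θstar)) + 4 * ρ (proj Mᗮ θstar) := by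
    have := hconv.inner_gradient_le_sub hdiff θhat
    nlinarith
  have hcompat := apply_proj_le_mul_norm ρ hφ (θhat - θstar)
  have hquad : α * ‖θhat - θstar‖ ^ 2 ≤ (Z + 2 * lam * ρ (proj Mᗮ θstar))
      + 3 / 2 * lam * φ * ‖θhat - θstar‖ := by
    nlinarith [hE hcone, mul_le_mul_of_nonneg_left hcompat hlam.le,
      mul_nonneg hlam.le (apply_nonneg ρ (proj Mbarᗮ (θhat - θstar)))]
  refine Real.le_sqrt_of_sq_le ((sq_le_of_mul_sq_le_add_mul hα hquad).trans ?_)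
  have hφα : 0 ≤ lam ^ 2 / α ^ 2 * φ ^ 2 := by positivity
  calc _ = 9 / 4 * (lam ^ 2 / α ^ 2 * φ ^ 2)
          + 1 / α * (2 * Z + 4 * lam * ρ (proj Mᗮ θstar)) := by ring
    _ ≤ _ := by linarith

end Regularizer

theorem convexOn_finset_sum {E ι : Type*} [AddCommGroup E] [Module ℝ E] {S : Set E}
    (hS : Convex ℝ S) (s : Finset ι) {g : ι → E → ℝ} (hg : ∀ i ∈ s, ConvexOn ℝ S (g i)) :
    ConvexOn ℝ S (fun x => ∑ i ∈ s, g i x) := by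
  classical
  induction s using Finset.induction_on with
  | empty => simpa using convexOn_const (0 : ℝ) hS
  | insert i s hi ih =>
    simp only [Finset.sum_insert hi]
    exact (hg i (Finset.mem_insert_self i s)).add
      (ih fun j hj => hg j (Finset.mem_insert_of_mem hj))

theorem nonneg_of_forall_sub_le_mul_norm_sub {E : Type*} [NormedAddCommGroup E]
    [Nontrivial E] {g : E → ℝ} {C : ℝ} (hg : ∀ x y, g x - g y ≤ C * ‖x - y‖) : 0 ≤ C := by
  obtain ⟨u, hu⟩ := exists_ne (0 : E)
  have h := add_le_add (hg u 0) (hg 0 u)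
  rw [zero_sub, norm_neg, sub_zero] at h
  nlinarith [norm_pos_iff.2 hu]

theorem sub_le_two_mul_of_norm_le {E : Type*} [SeminormedAddCommGroup E] {g : E → ℝ}
    {C k : ℝ} (hg : ∀ x y, g x - g y ≤ C * ‖x - y‖) (hC : 0 ≤ C) {x y : E} (hx : ‖x‖ ≤ k)
    (hy : ‖y‖ ≤ k) : g x - g y ≤ 2 * C * k := by
  have := mul_le_mul_of_nonneg_left ((norm_sub_le x y).trans (add_le_add hx hy)) hC
  linarith [hg x y]

theorem sub_le_two_mul_norm_of_le_of_lipschitz {E Θ : Type*} [SeminormedAddCommGroup Θ]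
    {f : E → Θ → ℝ} {C : ℝ} (hf : ∀ z θ₁ θ₂, f z θ₁ - f z θ₂ ≤ C * ‖θ₁ - θ₂‖)
    {z z' : E} {θ θhat : Θ} (hgreedy : f z θhat ≤ f z' θhat) :
    f z θ - f z' θ ≤ 2 * C * ‖θhat - θ‖ := by
  have h₁ := hf z θ θhat
  have h₂ := hf z' θhat θ
  rw [norm_sub_rev] at h₁
  linarith

theorem sum_Icc_le_of_explore_commit {r : ℕ → ℝ} {T0 T : ℕ} (hT0T : T0 ≤ T) {B D : ℝ}
    (hexplore : ∀ t ∈ Finset.Icc 1 T0, r t ≤ B)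
    (hcommit : ∀ t ∈ Finset.Ioc T0 T, r t ≤ D) :
    ∑ t ∈ Finset.Icc 1 T, r t ≤ T0 * B + ((T : ℝ) - T0) * D := by
  have hIcc : Finset.Icc 1 T = Finset.Ioc 0 T := by ext; simp; omega
  rw [hIcc, ← Finset.sum_Ioc_consecutive _ (Nat.zero_le T0) hT0T]
  have h₁ := Finset.sum_le_card_nsmul (Finset.Ioc 0 T0) r B fun t ht =>
    hexplore t (by simp only [Finset.mem_Ioc, Finset.mem_Icc] at ht ⊢; omega)
  have h₂ := Finset.sum_le_card_nsmul (Finset.Ioc T0 T) r D hcommit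
  simp only [Nat.card_Ioc, nsmul_eq_mul, Nat.cast_sub hT0T, Nat.sub_zero] at h₁ h₂
  linarith

theorem integral_le_add_mul_measureReal_of_ae_le_indicator {Ω : Type*} [MeasurableSpace Ω]
    {μ : Measure Ω} [IsProbabilityMeasure μ] {g : Ω → ℝ} {s : Set Ω} {c d : ℝ}
    (hd : 0 ≤ d) (hg : 0 ≤ᵐ[μ] g) (hle : ∀ᵐ ω ∂μ, g ω ≤ c + d * s.indicator 1 ω) :
    ∫ ω, g ω ∂μ ≤ c + d * μ.real s := by
  -- `s` need not be measurable: pass to a measurable hull of the same measure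
  set t := toMeasurable μ s
  have ht : MeasurableSet t := measurableSet_toMeasurable μ s
  have hst : s.indicator (1 : Ω → ℝ) ≤ t.indicator 1 :=
    Set.indicator_le_indicator_of_subset (subset_toMeasurable μ s) fun _ => zero_le_one
  have hint : Integrable (t.indicator (1 : Ω → ℝ)) μ := (integrable_const 1).indicator ht
  calc ∫ ω, g ω ∂μ ≤ ∫ ω, c + d * t.indicator 1 ω ∂μ :=
        integral_mono_of_nonneg hg ((integrable_const c).add (hint.const_mul d))
          (hle.mono fun ω h => h.trans
            (by have := mul_le_mul_of_nonneg_left (hst ω) hd; linarith))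
    _ = c + d * μ.real s := by
        rw [integral_add (integrable_const c) (hint.const_mul d), integral_const,
          integral_const_mul, integral_indicator_one ht]
        simp [t, measureReal_def, measure_toMeasurable]

theorem nonneg_of_ae_norm_le {Ω F : Type*} [MeasurableSpace Ω] {μ : Measure Ω} [NeZero μ]
    [SeminormedAddCommGroup F] {X : Ω → F} {k : ℝ} (hX : ∀ᵐ ω ∂μ, ‖X ω‖ ≤ k) : 0 ≤ k := by
  obtain ⟨ω, hω⟩ := hX.exists
  exact (norm_nonneg _).trans hω

section Regret

variable {E Θ : Type*} [SeminormedAddCommGroup E]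
  {f : E → Θ → ℝ} {C1 C2 k1 : ℝ} {K T0 T : ℕ}

theorem sum_regret_le_of_norm_le (hLip1 : ∀ x1 x2 θ, f x1 θ - f x2 θ ≤ C1 * ‖x1 - x2‖)
    (hC1 : 0 ≤ C1) {x : ℕ → Fin K → E} (hx : ∀ t k, ‖x t k‖ ≤ k1) (a astar : ℕ → Fin K)
    (θ : Θ) :
    ∑ t ∈ Finset.Icc 1 T, (f (x t (astar t)) θ - f (x t (a t)) θ) ≤ T * (2 * C1 * k1) := by
  simpa using Finset.sum_le_card_nsmul (Finset.Icc 1 T) _ _ fun t _ =>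
    sub_le_two_mul_of_norm_le (fun x1 x2 => hLip1 x1 x2 θ) hC1 (hx t (astar t)) (hx t (a t))

theorem sum_regret_le_of_greedy [SeminormedAddCommGroup Θ] (hT0T : T0 ≤ T)
    (hLip1 : ∀ x1 x2 θ, f x1 θ - f x2 θ ≤ C1 * ‖x1 - x2‖)
    (hLip2 : ∀ z θ1 θ2, f z θ1 - f z θ2 ≤ C2 * ‖θ1 - θ2‖) (hC1 : 0 ≤ C1)
    {x : ℕ → Fin K → E} (hx : ∀ t k, ‖x t k‖ ≤ k1) {a astar : ℕ → Fin K} {θ θhat : Θ}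
    (hgreedy : ∀ t, T0 < t → t ≤ T → f (x t (astar t)) θhat ≤ f (x t (a t)) θhat) :
    ∑ t ∈ Finset.Icc 1 T, (f (x t (astar t)) θ - f (x t (a t)) θ) ≤
      T0 * (2 * C1 * k1) + ((T : ℝ) - T0) * (2 * C2 * ‖θhat - θ‖) := by
  refine sum_Icc_le_of_explore_commit hT0T (fun t _ =>
    sub_le_two_mul_of_norm_le (fun x1 x2 => hLip1 x1 x2 θ) hC1 (hx t (astar t)) (hx t (a t)))
    fun t ht => sub_le_two_mul_norm_of_le_of_lipschitz hLip2 ?_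
  rw [Finset.mem_Ioc] at ht
  exact hgreedy t ht.1 ht.2

theorem integral_regret_le [SeminormedAddCommGroup Θ] {Ω : Type*} [MeasurableSpace Ω]
    {μ : Measure Ω} [IsProbabilityMeasure μ] (hT0T : T0 ≤ T)
    (hLip1 : ∀ x1 x2 θ, f x1 θ - f x2 θ ≤ C1 * ‖x1 - x2‖)
    (hLip2 : ∀ z θ1 θ2, f z θ1 - f z θ2 ≤ C2 * ‖θ1 - θ2‖) (hC1 : 0 ≤ C1) (hC2 : 0 ≤ C2)
    {x : ℕ → Fin K → Ω → E} (hx : ∀ᵐ ω ∂μ, ∀ t k, ‖x t k ω‖ ≤ k1)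
    {a astar : ℕ → Ω → Fin K} {θ : Θ} {θhat : Ω → Θ}
    (hcommit : ∀ ω, ∀ t, T0 < t → t ≤ T → ∀ b : Fin K,
      f (x t b ω) (θhat ω) ≤ f (x t (a t ω) ω) (θhat ω))
    (hastar : ∀ ω, ∀ t, 1 ≤ t → t ≤ T → ∀ b : Fin K,
      f (x t b ω) θ ≤ f (x t (astar t ω) ω) θ)
    {s : Set Ω} {r : ℝ} (hr : 0 ≤ r) (hgood : ∀ᵐ ω ∂μ, ω ∉ s → ‖θhat ω - θ‖ ≤ r) :
    ∫ ω, (∑ t ∈ Finset.Icc 1 T, (f (x t (astar t ω) ω) θ - f (x t (a t ω) ω) θ)) ∂μ ≤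
      T0 * (2 * C1 * k1) + ((T : ℝ) - T0) * (2 * C2 * r)
        + ((T : ℝ) - T0) * (2 * C1 * k1) * μ.real s := by
  have hk1 : 0 ≤ k1 :=
    nonneg_of_ae_norm_le (X := fun ω => x 0 (a 0 ω) ω) (hx.mono fun ω h => h _ _)
  have hT : (0 : ℝ) ≤ T - T0 := sub_nonneg.2 (Nat.cast_le.2 hT0T)
  refine integral_le_add_mul_measureReal_of_ae_le_indicator (by positivity)
    (.of_forall fun ω => Finset.sum_nonneg fun t ht =>
      sub_nonneg.2 (hastar ω t (Finset.mem_Icc.1 ht).1 (Finset.mem_Icc.1 ht).2 _)) ?_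
  filter_upwards [hx, hgood] with ω hxω hgoodω
  by_cases hω : ω ∈ s
  · have := sum_regret_le_of_norm_le (T := T) hLip1 hC1 hxω (a · ω) (astar · ω) θ
    rw [Set.indicator_of_mem hω, Pi.one_apply, mul_one]
    nlinarith [mul_nonneg hT (by positivity : 0 ≤ 2 * C2 * r)]
  · rw [Set.indicator_of_notMem hω, mul_zero, add_zero]
    refine (sum_regret_le_of_greedy hT0T hLip1 hLip2 hC1 hxω fun t h₁ h₂ =>
      hcommit ω t h₁ h₂ _).trans ?_
    gcongr
    exact hgoodω hω

end Regret

theorem explore_commit_bound_le_sum_Icc {T0 T : ℕ} (hT0T : T0 ≤ T) {b c r P q : ℝ}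
    (hb : 0 ≤ b) (hc : 0 ≤ c) (hr : 0 ≤ r) (hP : 0 ≤ P) (hPq : P ≤ q) :
    T0 * b + ((T : ℝ) - T0) * (c * r) + ((T : ℝ) - T0) * b * P ≤
      b * T0 + b * ∑ _t ∈ Finset.Icc T0 T, q + c * ∑ _t ∈ Finset.Icc T0 T, r := by
  rw [Finset.sum_const, Finset.sum_const, Nat.card_Icc, nsmul_eq_mul, nsmul_eq_mul,
    Nat.cast_sub (by omega), Nat.cast_add, Nat.cast_one]
  have hT : (0 : ℝ) ≤ T - T0 := sub_nonneg.2 (Nat.cast_le.2 hT0T)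
  nlinarith [mul_le_mul_of_nonneg_left hPq (mul_nonneg hT hb), mul_nonneg hb (hP.trans hPq),
    mul_nonneg hc hr]

theorem estc_problem_independent_regret_bound_general
    {p : ℕ} (K T T0 : ℕ) (hT0T : T0 ≤ T)
    {Ω : Type*} [MeasurableSpace Ω] (μ : Measure Ω) [IsProbabilityMeasure μ]
    (M Mbar : Submodule ℝ (EuclideanSpace ℝ (Fin p)))
    -- R is a norm, decomposable w.r.t. (M, M̄⊥):
    (R : EuclideanSpace ℝ (Fin p) → ℝ)
    (hR_tri : ∀ u v, R (u + v) ≤ R u + R v)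
    (hR_smul : ∀ (c : ℝ) (u), R (c • u) = |c| * R u)
    (hR_def : ∀ u, R u = 0 ↔ u = 0)
    (hR_dec : ∀ θ ∈ M, ∀ γ ∈ Mbarᗮ, R (θ + γ) = R θ + R γ)
    -- φ is the (finite) subspace compatibility constant of (‖·‖, R) on M̄:
    (φ : ℝ) (hφ : IsLUB ((fun u => R u / ‖u‖) '' {u | u ∈ Mbar ∧ u ≠ 0}) φ)
    (lam α Z : ℝ) (hlam : 0 < lam) (hα : 0 < α)
    -- model data: true parameter, reward function, contexts, arms, noise, rewards:
    (θstar : EuclideanSpace ℝ (Fin p))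
    (f : EuclideanSpace ℝ (Fin p) → EuclideanSpace ℝ (Fin p) → ℝ)
    (x : ℕ → Fin K → Ω → EuclideanSpace ℝ (Fin p))
    (a astar : ℕ → Ω → Fin K)
    -- Assumption 1: ‖x_{t,a}‖ ≤ k1 almost surely:
    (k1 : ℝ) (hk1 : ∀ t k, ∀ᵐ ω ∂μ, ‖x t k ω‖ ≤ k1)
    -- Assumption 2: Lipschitzness of f in both arguments:
    (C1 C2 : ℝ)
    (hLip1 : ∀ x1 x2 θ, f x1 θ - f x2 θ ≤ C1 * ‖x1 - x2‖)
    (hLip2 : ∀ z θ1 θ2, f z θ1 - f z θ2 ≤ C2 * ‖θ1 - θ2‖)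
    -- the loss is an M-estimator built from convex differentiable losses:
    (ℓ : ℕ → Ω → EuclideanSpace ℝ (Fin p) → ℝ)
    (hℓ_conv : ∀ τ ω, ConvexOn ℝ Set.univ (ℓ τ ω))
    (hℓ_diff : ∀ τ ω, Differentiable ℝ (ℓ τ ω))
    (L : Ω → EuclideanSpace ℝ (Fin p) → ℝ)
    (hL : ∀ ω θ, L ω θ = (1 / (T0 : ℝ)) * ∑ τ ∈ Finset.Icc 1 T0, ℓ τ ω θ)
    -- θ_{T0} almost surely minimizes the regularized loss:
    (θT0 : Ω → EuclideanSpace ℝ (Fin p))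
    (hmin : ∀ᵐ ω ∂μ, ∀ θ, L ω (θT0 ω) + lam * R (θT0 ω) ≤ L ω θ + lam * R θ)
    -- commit phase: a_t maximizes the estimated reward:
    (hcommit : ∀ ω, ∀ t, T0 < t → t ≤ T → ∀ b : Fin K,
      f (x t b ω) (θT0 ω) ≤ f (x t (a t ω) ω) (θT0 ω))
    -- a_t* maximizes the true reward:
    (hastar : ∀ ω, ∀ t, 1 ≤ t → t ≤ T → ∀ b : Fin K,
      f (x t b ω) θstar ≤ f (x t (astar t ω) ω) θstar) :
    -- conclusion: expected regret bound
    ∫ ω, (∑ t ∈ Finset.Icc 1 T,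
        (f (x t (astar t ω) ω) θstar - f (x t (a t ω) ω) θstar)) ∂μ ≤
      2 * C1 * k1 * T0
      + 2 * C1 * k1 * ∑ _t ∈ Finset.Icc T0 T,
          ((μ {ω | 2 * dualNorm R (gradient (L ω) θstar) ≤ lam}ᶜ).toReal
            + (μ {ω | ∀ θ : EuclideanSpace ℝ (Fin p),
                R (proj Mbarᗮ (θ - θstar)) ≤
                  3 * R (proj Mbar (θ - θstar)) + 4 * R (proj Mᗮ θstar) →
                α * ‖θ - θstar‖ ^ 2 - Z ≤
                  L ω θ - L ω θstar - ⟪gradient (L ω) θstar, θ - θstar⟫}ᶜ).toReal)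
      + 2 * C2 * ∑ _t ∈ Finset.Icc T0 T,
          Real.sqrt (9 * (lam ^ 2 / α ^ 2) * φ ^ 2 +
            (1 / α) * (2 * Z + 4 * lam * R (proj Mᗮ θstar))) := by
  let ρ : Seminorm ℝ (EuclideanSpace ℝ (Fin p)) :=
    Seminorm.of R hR_tri fun c u => by rw [Real.norm_eq_abs]; exact hR_smul c u
  have : Nontrivial (EuclideanSpace ℝ (Fin p)) := by
    obtain ⟨_, ⟨u, ⟨-, hu⟩, -⟩⟩ := hφ.nonempty
    exact ⟨u, 0, hu⟩
  have hC1 : 0 ≤ C1 := nonneg_of_forall_sub_le_mul_norm_sub fun x1 x2 => hLip1 x1 x2 θstar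
  have hC2 : 0 ≤ C2 := nonneg_of_forall_sub_le_mul_norm_sub (hLip2 0)
  have hx : ∀ᵐ ω ∂μ, ∀ t k, ‖x t k ω‖ ≤ k1 := ae_all_iff.2 fun t => ae_all_iff.2 (hk1 t)
  have hk1_nonneg : 0 ≤ k1 := nonneg_of_ae_norm_le (X := fun ω => x 0 (a 0 ω) ω)
    (hx.mono fun ω h => h _ _)
  -- the bad set of `integral_regret_le` is read off the goal: it is `Aᶜ ∪ Eᶜ`
  refine (integral_regret_le hT0T hLip1 hLip2 hC1 hC2 hx hcommit hastar (Real.sqrt_nonneg _)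
    ?_).trans (explore_commit_bound_le_sum_Icc hT0T (by positivity) (by positivity)
      (Real.sqrt_nonneg _) measureReal_nonneg (measureReal_union_le _ _))
  filter_upwards [hmin] with ω hω hgood
  simp only [Set.mem_union, Set.mem_compl_iff, not_or, not_not] at hgood
  have hLω : L ω = fun θ => (1 / (T0 : ℝ)) * ∑ τ ∈ Finset.Icc 1 T0, ℓ τ ω θ := funext (hL ω)
  have hconv : ConvexOn ℝ Set.univ (L ω) := by
    rw [hLω]
    exact (convexOn_finset_sum convex_univ _ fun τ _ => hℓ_conv τ ω).smul (by positivity)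
  have hdiff : DifferentiableAt ℝ (L ω) θstar := by
    rw [hLω]
    exact (DifferentiableAt.fun_sum fun τ _ => hℓ_diff τ ω θstar).const_mul _
  exact norm_sub_le_of_regularized_min ρ (fun v => (hR_def v).1) hR_dec hφ hlam hα hconv
    hdiff (hω θstar) hgood.1 (hgood.2 _)

theorem estc_problem_independent_regret_bound
    {p : ℕ} (K T T0 : ℕ) (hK : 0 < K) (hT0 : 0 < T0) (hT0T : T0 ≤ T)
    {Ω : Type*} [MeasurableSpace Ω] (μ : Measure Ω) [IsProbabilityMeasure μ]
    (M Mbar : Submodule ℝ (EuclideanSpace ℝ (Fin p))) (hMM : M ≤ Mbar)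
    -- R is a norm, decomposable w.r.t. (M, M̄⊥):
    (R : EuclideanSpace ℝ (Fin p) → ℝ)
    (hR_tri : ∀ u v, R (u + v) ≤ R u + R v)
    (hR_smul : ∀ (c : ℝ) (u), R (c • u) = |c| * R u)
    (hR_def : ∀ u, R u = 0 ↔ u = 0)
    (hR_dec : ∀ θ ∈ M, ∀ γ ∈ Mbarᗮ, R (θ + γ) = R θ + R γ)
    -- φ is the (finite) subspace compatibility constant of (‖·‖, R) on M̄:
    (φ : ℝ) (hφ : IsLUB ((fun u => R u / ‖u‖) '' {u | u ∈ Mbar ∧ u ≠ 0}) φ)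
    (lam α Z : ℝ) (hlam : 0 < lam) (hα : 0 < α) (hZ : 0 ≤ Z)
    -- model data: true parameter, reward function, contexts, arms, noise, rewards:
    (θstar : EuclideanSpace ℝ (Fin p))
    (f : EuclideanSpace ℝ (Fin p) → EuclideanSpace ℝ (Fin p) → ℝ)
    (x : ℕ → Fin K → Ω → EuclideanSpace ℝ (Fin p))
    (a astar : ℕ → Ω → Fin K)
    (ε : ℕ → Ω → ℝ) (y : ℕ → Ω → ℝ)
    (hx_meas : ∀ t k, Measurable (x t k)) (ha_meas : ∀ t, Measurable (a t))
    -- Assumption 1: ‖x_{t,a}‖ ≤ k1 almost surely: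
    (k1 : ℝ) (hk1 : ∀ t k, ∀ᵐ ω ∂μ, ‖x t k ω‖ ≤ k1)
    -- Assumption 2: Lipschitzness of f in both arguments:
    (C1 C2 : ℝ)
    (hLip1 : ∀ x1 x2 θ, f x1 θ - f x2 θ ≤ C1 * ‖x1 - x2‖)
    (hLip2 : ∀ z θ1 θ2, f z θ1 - f z θ2 ≤ C2 * ‖θ1 - θ2‖)
    -- exploration phase: uniformly random arms, observed noisy rewards:
    (hunif : ∀ t, 1 ≤ t → t ≤ T0 → ∀ k : Fin K, μ {ω | a t ω = k} = (K : ENNReal)⁻¹)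
    (hε_mean : ∀ t, 1 ≤ t → t ≤ T0 → ∫ ω, ε t ω ∂μ = 0)
    (hy : ∀ t, 1 ≤ t → t ≤ T0 → ∀ ω, y t ω = f (x t (a t ω) ω) θstar + ε t ω)
    -- the loss is an M-estimator built from convex differentiable losses:
    (ℓ : ℕ → Ω → EuclideanSpace ℝ (Fin p) → ℝ)
    (hℓ_conv : ∀ τ ω, ConvexOn ℝ Set.univ (ℓ τ ω))
    (hℓ_diff : ∀ τ ω, Differentiable ℝ (ℓ τ ω))
    (L : Ω → EuclideanSpace ℝ (Fin p) → ℝ)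
    (hL : ∀ ω θ, L ω θ = (1 / (T0 : ℝ)) * ∑ τ ∈ Finset.Icc 1 T0, ℓ τ ω θ)
    -- θ_{T0} almost surely minimizes the regularized loss:
    (θT0 : Ω → EuclideanSpace ℝ (Fin p)) (hθT0_meas : Measurable θT0)
    (hmin : ∀ᵐ ω ∂μ, ∀ θ, L ω (θT0 ω) + lam * R (θT0 ω) ≤ L ω θ + lam * R θ)
    -- commit phase: a_t maximizes the estimated reward:
    (hcommit : ∀ ω, ∀ t, T0 < t → t ≤ T → ∀ b : Fin K,
      f (x t b ω) (θT0 ω) ≤ f (x t (a t ω) ω) (θT0 ω))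
    -- a_t* maximizes the true reward:
    (hastar : ∀ ω, ∀ t, 1 ≤ t → t ≤ T → ∀ b : Fin K,
      f (x t b ω) θstar ≤ f (x t (astar t ω) ω) θstar) :
    -- conclusion: expected regret bound
    ∫ ω, (∑ t ∈ Finset.Icc 1 T,
        (f (x t (astar t ω) ω) θstar - f (x t (a t ω) ω) θstar)) ∂μ ≤
      2 * C1 * k1 * T0
      + 2 * C1 * k1 * ∑ _t ∈ Finset.Icc T0 T,
          ((μ {ω | 2 * dualNorm R (gradient (L ω) θstar) ≤ lam}ᶜ).toReal
            + (μ {ω | ∀ θ : EuclideanSpace ℝ (Fin p),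
                R (proj Mbarᗮ (θ - θstar)) ≤
                  3 * R (proj Mbar (θ - θstar)) + 4 * R (proj Mᗮ θstar) →
                α * ‖θ - θstar‖ ^ 2 - Z ≤
                  L ω θ - L ω θstar - ⟪gradient (L ω) θstar, θ - θstar⟫}ᶜ).toReal)
      + 2 * C2 * ∑ _t ∈ Finset.Icc T0 T,
          Real.sqrt (9 * (lam ^ 2 / α ^ 2) * φ ^ 2 +
            (1 / α) * (2 * Z + 4 * lam * R (proj Mᗮ θstar))) :=
  estc_problem_independent_regret_bound_general K T T0 hT0T μ M Mbar R hR_tri hR_smul hR_def hR_dec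
    φ hφ lam α Z hlam hα θstar f x a astar k1 hk1 C1 C2 hLip1 hLip2 ℓ hℓ_conv hℓ_diff L hL θT0 hmin
    hcommit hastar
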